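/- Let f : X → 𝒢(Z,C) be a convex function and x₀ ∈ dom f. If x₀ solves the set-valued Minty inequality (MVI_M): for all x ∈ X with f(x) ≠ f(x₀), 0⁺f(x) ⊉ f′(x, x₀−x), then x₀ solves the scalarized Minty inequality (mvi_M): for all x ∈ X with f(x) ≠ f(x₀) there exists z* ∈ C⁻∖{0} with φ_{f,z*}(x) ≠ −∞ and φ′_{f,z*}(x, x₀−x) < 0. If additionally the strong regularity condition holds, namely inf{−z*(z) : z ∈ f′(x, x₀−x)} = φ′_{f,z*}(x, x₀−x) for all x ∈ X and all z* ∈ C⁻∖{0}, then x₀ solves (MVI_M) if and only if it solves (mvi_M). -/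

import Mathlib

open Set Pointwise

noncomputable section

variable {Z : Type*} [AddCommGroup Z] [Module ℝ Z] [TopologicalSpace Z]

/-- The inf-residual `A ⊖ B = {z : B + {z} ⊆ A}`. -/
def resid (A B : Set Z) : Set Z := {z : Z | B + {z} ⊆ A}

/-- The recession cone `0⁺A`, with the convention `0⁺∅ = ∅`. -/
def recCone (A : Set Z) : Set Z := {z : Z | A.Nonempty ∧ A + {z} ⊆ A}

/-- `A ⊕ B = cl (A + B)`. -/
def oplus (A B : Set Z) : Set Z := closure (A + B)

/-- Membership in `𝒢(Z,C)`: `A = cl co (A + C)`. -/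
def IsG (C A : Set Z) : Prop := A = closure (convexHull ℝ (A + C))

/-- The set `C⁻ \ {0}` of nonzero elements of the negative dual cone. -/
def negDualNZ (C : Set Z) : Set (Z →L[ℝ] ℝ) :=
  {p : Z →L[ℝ] ℝ | (∀ c ∈ C, p c ≤ 0) ∧ p ≠ 0}

/-- `inf {-z*(z) : z ∈ A}` as an extended real. -/
def scal (p : Z →L[ℝ] ℝ) (A : Set Z) : EReal :=
  sInf ((fun z => ((-(p z) : ℝ) : EReal)) '' A)

/-- Support function `σ(z*|A) = sup {z*(z) : z ∈ A}` as an extended real. -/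
def suppF (p : Z →L[ℝ] ℝ) (A : Set Z) : EReal :=
  sSup ((fun z => ((p z : ℝ) : EReal)) '' A)

/-- Inf-residuation on the extended reals: `r ⊖ s = inf {t ∈ ℝ : r ≤ s + t}`. -/
def eresid (r s : EReal) : EReal :=
  sInf ((fun t : ℝ => (t : EReal)) '' {t : ℝ | r ≤ s + (t : EReal)})

variable {X : Type*} [AddCommGroup X] [Module ℝ X]

/-- The scalarization `φ_{f,z*}(x) = inf {-z*(z) : z ∈ f(x)}`. -/
def phi (f : X → Set Z) (p : Z →L[ℝ] ℝ) (x : X) : EReal := scal p (f x)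

/-- Convexity for set-valued functions:
`f(t x₁ + (1-t) x₂) ⊇ cl (t f(x₁) + (1-t) f(x₂))`. -/
def ConvexSV (f : X → Set Z) : Prop :=
  ∀ x₁ x₂ : X, ∀ t : ℝ, t ∈ Ioo (0:ℝ) 1 →
    closure (t • f x₁ + (1 - t) • f x₂) ⊆ f (t • x₁ + (1 - t) • x₂)

/-- The set-valued directional derivative
`f′(x,u) = ⋂_{t₀>0} cl co ⋃_{0<t<t₀} (1/t)•(f(x+tu) ⊖ f(x))`. -/
def sder (f : X → Set Z) (x u : X) : Set Z :=
  ⋂ t₀ ∈ Ioi (0:ℝ), closure (convexHull ℝ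
    (⋃ t ∈ Ioo (0:ℝ) t₀, (1 / t) • resid (f (x + t • u)) (f x)))

/-- The scalar Dini derivative `φ′_{f,z*}(x,u) = inf_{t>0} (1/t)(φ(x+tu) ⊖ φ(x))`. -/
def phiDer (f : X → Set Z) (p : Z →L[ℝ] ℝ) (x u : X) : EReal :=
  ⨅ t ∈ Ioi (0:ℝ), (((1 / t : ℝ)) : EReal) * eresid (phi f p (x + t • u)) (phi f p x)

end

/-! If `f′(x, x₀ - x) ⊈ 0⁺f(x)` with `f x ≠ ∅`, pick `z` in the derivative and `w ∈ f x` with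
`w + z ∉ f x`, and strictly separate `w + z` from the closed convex set `f x`. Because
`f x + C ⊆ f x` and `C` is a cone, the separating functional lies in `C⁻`; it is bounded above on
`f x`, so `φ ≠ -∞`, and positive at `z`. Positivity passes from the closed convex hull defining
`f′` to a single residual `(1/t)(f(x+tu) ⊖ f(x))`, and `f x + tz' ⊆ f(x+tu)` gives
`φ(x+tu) ≤ φ(x) - t z*(z') < φ(x)`, so `φ′ < 0`. When `f x = ∅`, `φ = +∞` and `φ′ = -∞`.

Conversely, under strong regularity `φ′ < 0` produces `z ∈ f′(x, x₀ - x)` with `z*(z) > 0`; were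
`z` in `0⁺f(x)`, the points `w + n z ∈ f x` would force `φ = -∞`. -/

lemma eresid_le_of_le_add {r s : EReal} {t : ℝ} (h : r ≤ s + t) : eresid r s ≤ t :=
  sInf_le ⟨t, h, rfl⟩

lemma eresid_top_right (r : EReal) : eresid r ⊤ = ⊥ := by
  refine (EReal.eq_bot_iff_forall_lt _).2 fun y => ?_
  calc eresid r ⊤ ≤ ((y - 1 : ℝ) : EReal) :=
        eresid_le_of_le_add (le_top.trans_eq (EReal.top_add_coe _).symm)
    _ < y := by exact_mod_cast sub_one_lt y

lemma add_nsmul_mem_of_mem_recCone {Z : Type*} [AddCommGroup Z] {A : Set Z} {z : Z}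
    (hz : z ∈ recCone A) {w : Z} (hw : w ∈ A) (n : ℕ) : w + n • z ∈ A := by
  induction n with
  | zero => simpa using hw
  | succ n ih =>
    rw [succ_nsmul, ← add_assoc]
    exact hz.2 (add_mem_add ih rfl)

section Scalarization

variable {Z : Type*} [AddCommGroup Z] [Module ℝ Z] [TopologicalSpace Z]
  {C A B : Set Z} {p : Z →L[ℝ] ℝ} {z : Z}

lemma IsG.isClosed (hA : IsG C A) : IsClosed A := by
  rw [hA]
  exact isClosed_closure

lemma IsG.add_mem (hA : IsG C A) {w c : Z} (hw : w ∈ A) (hc : c ∈ C) : w + c ∈ A := by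
  rw [hA]
  exact subset_closure (subset_convexHull ℝ _ (add_mem_add hw hc))

lemma IsG.map_nonpos_of_forall_lt (hA : IsG C A) (hCcone : ∀ c ∈ C, ∀ r : ℝ, 0 < r → r • c ∈ C)
    {u : ℝ} (hpA : ∀ a ∈ A, p a < u) {w c : Z} (hw : w ∈ A) (hc : c ∈ C) : p c ≤ 0 := by
  by_contra! hpc
  have hr : 0 < (u - p w) / p c := div_pos (sub_pos.2 (hpA w hw)) hpc
  have hlt := hpA _ (hA.add_mem hw (hCcone c hc _ hr))
  rw [map_add, map_smul, smul_eq_mul, div_mul_cancel₀ _ hpc.ne'] at hlt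
  linarith

lemma ContinuousLinearMap.exists_pos_of_mem_closure_convexHull {S : Set Z}
    (hz : z ∈ closure (convexHull ℝ S)) (hpz : 0 < p z) : ∃ y ∈ S, 0 < p y := by
  by_contra! hS
  have hsub : closure (convexHull ℝ S) ⊆ {y | p y ≤ 0} :=
    closure_minimal (convexHull_min hS (convex_halfSpace_le (p : Z →ₗ[ℝ] ℝ).isLinear 0))
      (isClosed_le p.continuous continuous_const)
  exact (hsub hz).not_gt hpz

lemma scal_ne_bot_of_forall_lt {u : ℝ} (hpA : ∀ a ∈ A, p a < u) : scal p A ≠ ⊥ := by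
  have hle : ((-u : ℝ) : EReal) ≤ scal p A := by
    refine le_sInf ?_
    rintro _ ⟨a, ha, rfl⟩
    exact EReal.coe_le_coe_iff.2 (neg_le_neg (hpA a ha).le)
  exact ne_bot_of_le_ne_bot (EReal.coe_ne_bot _) hle

lemma scal_le_scal_add_of_mem_resid (hz : z ∈ resid A B) :
    scal p A ≤ scal p B + ((-(p z) : ℝ) : EReal) := by
  rw [← EReal.sub_le_iff_le_add (.inl (EReal.coe_ne_bot _)) (.inl (EReal.coe_ne_top _))]
  refine le_sInf ?_
  rintro _ ⟨w, hw, rfl⟩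
  rw [EReal.sub_le_iff_le_add (.inl (EReal.coe_ne_bot _)) (.inl (EReal.coe_ne_top _)),
    ← EReal.coe_add]
  refine sInf_le ⟨w + z, hz (add_mem_add hw rfl), ?_⟩
  simp only [map_add, neg_add]

lemma scal_eq_bot_of_mem_recCone (hz : z ∈ recCone A) (hpz : 0 < p z) : scal p A = ⊥ := by
  obtain ⟨w, hw⟩ := hz.1
  refine (EReal.eq_bot_iff_forall_lt _).2 fun y => ?_
  obtain ⟨n, hn⟩ := exists_nat_gt ((-(p w) - y) / p z)
  rw [div_lt_iff₀ hpz] at hn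
  calc scal p A ≤ ((-(p (w + n • z)) : ℝ) : EReal) :=
        sInf_le ⟨_, add_nsmul_mem_of_mem_recCone hz hw n, rfl⟩
    _ < y := by
      rw [map_add, map_nsmul, nsmul_eq_mul]
      exact_mod_cast (by linarith)

variable [IsTopologicalAddGroup Z] [ContinuousSMul ℝ Z]

lemma IsG.convex (hA : IsG C A) : Convex ℝ A := by
  rw [hA]
  exact (convex_convexHull ℝ _).closure

variable [LocallyConvexSpace ℝ Z]

lemma IsG.exists_negDualNZ_of_notMem_recCone (hA : IsG C A)
    (hCcone : ∀ c ∈ C, ∀ r : ℝ, 0 < r → r • c ∈ C) (hne : A.Nonempty) (hz : z ∉ recCone A) :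
    ∃ p ∈ negDualNZ C, scal p A ≠ ⊥ ∧ 0 < p z := by
  obtain ⟨_, hwz_mem, hwz⟩ := not_subset.1 fun h => hz ⟨hne, h⟩
  rw [add_singleton] at hwz_mem
  obtain ⟨w, hw, rfl⟩ := hwz_mem
  obtain ⟨p, u, hpA, hpwz⟩ := geometric_hahn_banach_closed_point hA.convex hA.isClosed hwz
  have hpz : 0 < p z := by
    rw [map_add] at hpwz
    linarith [hpA w hw]
  refine ⟨p, ⟨fun c hc => hA.map_nonpos_of_forall_lt hCcone hpA hw hc, ?_⟩,
    scal_ne_bot_of_forall_lt hpA, hpz⟩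
  rintro rfl
  exact hpz.ne rfl

end Scalarization

section MintyInequality

variable {Z : Type*} [AddCommGroup Z] [Module ℝ Z] [TopologicalSpace Z]
  {X : Type*} [AddCommGroup X] [Module ℝ X]
  {C : Set Z} {f : X → Set Z} {p : Z →L[ℝ] ℝ} {x u : X}

lemma phiDer_le {t : ℝ} (ht : 0 < t) :
    phiDer f p x u ≤ ((1 / t : ℝ) : EReal) * eresid (phi f p (x + t • u)) (phi f p x) :=
  iInf₂_le t ht

lemma phiDer_eq_bot_of_eq_empty (hx : f x = ∅) : phiDer f p x u = ⊥ := by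
  have hphi : phi f p x = ⊤ := by simp [phi, scal, hx]
  have h := phiDer_le (f := f) (p := p) (x := x) (u := u) one_pos
  rwa [hphi, eresid_top_right, div_one, EReal.coe_one, one_mul, le_bot_iff] at h

lemma phiDer_neg_of_mem_resid {t : ℝ} (ht : 0 < t) {z : Z}
    (hz : z ∈ resid (f (x + t • u)) (f x)) (hpz : 0 < p z) : phiDer f p x u < 0 := by
  have hres : eresid (phi f p (x + t • u)) (phi f p x) < 0 :=
    (eresid_le_of_le_add (scal_le_scal_add_of_mem_resid hz)).trans_lt
      (by exact_mod_cast neg_neg_of_pos hpz)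
  exact (phiDer_le ht).trans_lt
    (EReal.mul_neg_iff.2 (.inl ⟨by exact_mod_cast one_div_pos.2 ht, hres⟩))

lemma exists_mem_resid_of_mem_sder {z : Z} (hz : z ∈ sder f x u) (hpz : 0 < p z) :
    ∃ t : ℝ, 0 < t ∧ ∃ y ∈ resid (f (x + t • u)) (f x), 0 < p y := by
  obtain ⟨_, hy, hpy⟩ :=
    p.exists_pos_of_mem_closure_convexHull (mem_iInter₂.1 hz 1 (mem_Ioi.2 one_pos)) hpz
  simp only [mem_iUnion, mem_smul_set] at hy
  obtain ⟨t, ht, y, hy, rfl⟩ := hy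
  rw [map_smul, smul_eq_mul] at hpy
  exact ⟨t, ht.1, y, hy, pos_of_mul_pos_right hpy (one_div_pos.2 ht.1).le⟩

lemma exists_phiDer_neg_of_not_subset_recCone [IsTopologicalAddGroup Z] [ContinuousSMul ℝ Z]
    [LocallyConvexSpace ℝ Z] (hCcone : ∀ c ∈ C, ∀ r : ℝ, 0 < r → r • c ∈ C)
    (hdual : (negDualNZ C).Nonempty) (hG : IsG C (f x)) (h : ¬ sder f x u ⊆ recCone (f x)) :
    ∃ p ∈ negDualNZ C, phi f p x ≠ ⊥ ∧ phiDer f p x u < 0 := by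
  rcases (f x).eq_empty_or_nonempty with hx | hx
  · obtain ⟨p, hp⟩ := hdual
    refine ⟨p, hp, by simp [phi, scal, hx], ?_⟩
    rw [phiDer_eq_bot_of_eq_empty hx]
    exact EReal.bot_lt_zero
  obtain ⟨z, hz, hzrec⟩ := not_subset.1 h
  obtain ⟨p, hp, hphi, hpz⟩ := hG.exists_negDualNZ_of_notMem_recCone hCcone hx hzrec
  obtain ⟨t, ht, y, hy, hpy⟩ := exists_mem_resid_of_mem_sder hz hpz
  exact ⟨p, hp, hphi, phiDer_neg_of_mem_resid ht hy hpy⟩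

lemma not_subset_recCone_of_phiDer_neg (hreg : scal p (sder f x u) = phiDer f p x u)
    (hphi : phi f p x ≠ ⊥) (hder : phiDer f p x u < 0) : ¬ sder f x u ⊆ recCone (f x) := by
  intro hsub
  rw [← hreg, scal, sInf_lt_iff] at hder
  obtain ⟨_, ⟨z, hz, rfl⟩, hpz⟩ := hder
  have hpz : 0 < p z := by
    have : ((-(p z) : ℝ) : EReal) < 0 := hpz
    have : -(p z) < 0 := by exact_mod_cast this
    linarith
  exact hphi (scal_eq_bot_of_mem_recCone (hsub hz) hpz)

end MintyInequality

theorem stmt_16_general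
  {Z : Type*} [AddCommGroup Z] [Module ℝ Z] [TopologicalSpace Z]
  [IsTopologicalAddGroup Z] [ContinuousSMul ℝ Z] [LocallyConvexSpace ℝ Z]
  {X : Type*} [AddCommGroup X] [Module ℝ X]
  (C : Set Z)
  (hCcone : ∀ c ∈ C, ∀ r : ℝ, 0 < r → r • c ∈ C)
  (hdual : (negDualNZ C).Nonempty)
  (f : X → Set Z) (hG : ∀ x, IsG C (f x))
  (x₀ : X) :
    ((∀ x : X, f x ≠ f x₀ → ¬ (sder f x (x₀ - x) ⊆ recCone (f x))) → (∀ x : X, f x ≠ f x₀ →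
      ∃ p ∈ negDualNZ C, phi f p x ≠ ⊥ ∧ phiDer f p x (x₀ - x) < 0))
    ∧ ((∀ x : X, ∀ p ∈ negDualNZ C, scal p (sder f x (x₀ - x)) = phiDer f p x (x₀ - x)) → ((∀ x : X, f x ≠ f x₀ → ¬ (sder f x (x₀ - x) ⊆ recCone (f x))) ↔ (∀ x : X, f x ≠ f x₀ →
      ∃ p ∈ negDualNZ C, phi f p x ≠ ⊥ ∧ phiDer f p x (x₀ - x) < 0))) := by
  have minty_to_scalar : (∀ x : X, f x ≠ f x₀ → ¬ (sder f x (x₀ - x) ⊆ recCone (f x))) →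
      ∀ x : X, f x ≠ f x₀ → ∃ p ∈ negDualNZ C, phi f p x ≠ ⊥ ∧ phiDer f p x (x₀ - x) < 0 :=
    fun H x hx => exists_phiDer_neg_of_not_subset_recCone hCcone hdual (hG x) (H x hx)
  refine ⟨minty_to_scalar, fun hreg => ⟨minty_to_scalar, fun H x hx => ?_⟩⟩
  obtain ⟨p, hp, hphi, hder⟩ := H x hx
  exact not_subset_recCone_of_phiDer_neg (hreg x p hp) hphi hder

theorem stmt_16
  {Z : Type*} [AddCommGroup Z] [Module ℝ Z] [TopologicalSpace Z]
  [IsTopologicalAddGroup Z] [ContinuousSMul ℝ Z] [LocallyConvexSpace ℝ Z] [T2Space Z]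
  {X : Type*} [AddCommGroup X] [Module ℝ X]
  (C : Set Z) (hCclosed : IsClosed C) (hCconv : Convex ℝ C)
  (hCcone : ∀ c ∈ C, ∀ r : ℝ, 0 < r → r • c ∈ C) (hC0 : (0:Z) ∈ C)
  (hdual : (negDualNZ C).Nonempty)
  (f : X → Set Z) (hG : ∀ x, IsG C (f x)) (hf : ConvexSV f)
  (x₀ : X) (hx₀ : (f x₀).Nonempty) :
    ((∀ x : X, f x ≠ f x₀ → ¬ (sder f x (x₀ - x) ⊆ recCone (f x))) → (∀ x : X, f x ≠ f x₀ →
      ∃ p ∈ negDualNZ C, phi f p x ≠ ⊥ ∧ phiDer f p x (x₀ - x) < 0))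
    ∧ ((∀ x : X, ∀ p ∈ negDualNZ C, scal p (sder f x (x₀ - x)) = phiDer f p x (x₀ - x)) → ((∀ x : X, f x ≠ f x₀ → ¬ (sder f x (x₀ - x) ⊆ recCone (f x))) ↔ (∀ x : X, f x ≠ f x₀ →
      ∃ p ∈ negDualNZ C, phi f p x ≠ ⊥ ∧ phiDer f p x (x₀ - x) < 0))) :=
  stmt_16_general C hCcone hdual f hG x₀
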